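/- If G₁ is a proper subclass of a closed class G₂ of finite graphs and G₁ is precomplete in G₂ (i.e., adding any single graph of G₂ \ G₁ to G₁ and closing under gluing yields all of G₂), then G₂ \ G₁ contains exactly one graph (up to isomorphism). -/
import Mathlib


/-- A finite multigraph: vertices, edges, and an endpoint map assigning to each
edge an unordered pair of vertices (loops and parallel edges allowed). -/
structure MultiGraph where
  V : Type
  E : Type
  [fintV : Fintype V]
  [fintE : Fintype E]
  [decV : DecidableEq V]
  ends : E → Sym2 V

attribute [instance] MultiGraph.fintV MultiGraph.fintE MultiGraph.decV

/-- An embedding of the multigraph `G` into the multigraph `H` (a subgraph copy). -/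
structure Emb (G H : MultiGraph) where
  vmap : G.V → H.V
  emap : G.E → H.E
  vinj : Function.Injective vmap
  einj : Function.Injective emap
  ends_eq : ∀ e, H.ends (emap e) = (G.ends e).map vmap

/-- An isomorphism of multigraphs. -/
structure Iso (G H : MultiGraph) extends Emb G H where
  vsurj : Function.Surjective vmap
  esurj : Function.Surjective emap

/-- `GlueAt G G₁ G₂ Gt j₁ j₂ f₁ f₂` says that `G` is the result of a gluing
operation applied to `G₁` and `G₂`, identifying the copy `j₁` of `Gt` inside `G₁`
with the copy `j₂` of `Gt` inside `G₂`: `f₁`, `f₂` embed the operands into the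
result, they agree exactly on the identified subgraph, and together they cover `G`. -/
def GlueAt (G G₁ G₂ Gt : MultiGraph) (j₁ : Emb Gt G₁) (j₂ : Emb Gt G₂)
    (f₁ : Emb G₁ G) (f₂ : Emb G₂ G) : Prop :=
  (∀ x, f₁.vmap (j₁.vmap x) = f₂.vmap (j₂.vmap x)) ∧
  (∀ e, f₁.emap (j₁.emap e) = f₂.emap (j₂.emap e)) ∧
  (∀ v, (∃ a, f₁.vmap a = v) ∨ (∃ b, f₂.vmap b = v)) ∧
  (∀ e, (∃ a, f₁.emap a = e) ∨ (∃ b, f₂.emap b = e)) ∧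
  (∀ a b, f₁.vmap a = f₂.vmap b → ∃ x, j₁.vmap x = a ∧ j₂.vmap x = b) ∧
  (∀ a b, f₁.emap a = f₂.emap b → ∃ x, j₁.emap x = a ∧ j₂.emap x = b)

/-- `G` is a result of a gluing operation applied to `G₁` and `G₂` with gluing
subgraph `Gt`. -/
def IsGluing (G G₁ G₂ Gt : MultiGraph) : Prop :=
  ∃ (j₁ : Emb Gt G₁) (j₂ : Emb Gt G₂) (f₁ : Emb G₁ G) (f₂ : Emb G₂ G),
    GlueAt G G₁ G₂ Gt j₁ j₂ f₁ f₂

/-- A nontrivial gluing: neither identified subgraph is the whole operand. -/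
def IsNontrivialGluing (G G₁ G₂ Gt : MultiGraph) : Prop :=
  ∃ (j₁ : Emb Gt G₁) (j₂ : Emb Gt G₂) (f₁ : Emb G₁ G) (f₂ : Emb G₂ G),
    GlueAt G G₁ G₂ Gt j₁ j₂ f₁ f₂ ∧
    ¬ (Function.Surjective j₁.vmap ∧ Function.Surjective j₁.emap) ∧
    ¬ (Function.Surjective j₂.vmap ∧ Function.Surjective j₂.emap)

/-- `O n`: the empty (edgeless) graph on `n` vertices. -/
abbrev O (n : ℕ) : MultiGraph := { V := Fin n, E := Empty, ends := fun e => e.elim }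

/-- `K₂`: a single edge on two vertices. -/
abbrev K2 : MultiGraph := { V := Fin 2, E := Fin 1, ends := fun _ => s((0 : Fin 2), (1 : Fin 2)) }

/-- `CycleG n`: the simple cycle on `n` vertices (`CycleG 1` is a loop,
`CycleG 2` a pair of parallel edges). -/
def CycleG (n : ℕ) : MultiGraph :=
  { V := Fin n, E := Fin n,
    ends := fun e => s(e, ⟨(e.val + 1) % n, Nat.mod_lt _ e.pos⟩) }

/-- `C₁`: a single vertex with a loop. -/
abbrev C1 : MultiGraph := CycleG 1

/-- Number of occurrences of `v` among the two endpoints in an unordered pair. -/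
def vcount {α : Type} [DecidableEq α] (v : α) : Sym2 α → ℕ :=
  Sym2.lift ⟨fun a b => (if a = v then 1 else 0) + (if b = v then 1 else 0),
    fun _ _ => add_comm _ _⟩

/-- Degree of a vertex in a multigraph (a loop contributes 2). -/
def MultiGraph.degree (G : MultiGraph) (v : G.V) : ℕ := ∑ e : G.E, vcount v (G.ends e)

/-- Adjacency in a multigraph. -/
def MultiGraph.Adj (G : MultiGraph) (v w : G.V) : Prop := ∃ e, G.ends e = s(v, w)

/-- Connectivity of a multigraph. -/
def MultiGraph.Connected (G : MultiGraph) : Prop :=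
  Nonempty G.V ∧ ∀ v w, Relation.ReflTransGen G.Adj v w

/-- A graph has a cycle iff it contains a subgraph isomorphic to some `CycleG n`,
`n ≥ 1` (this includes loops and pairs of parallel edges). -/
def HasCycle (G : MultiGraph) : Prop := ∃ n, 1 ≤ n ∧ Nonempty (Emb (CycleG n) G)

/-- A Hamiltonian graph: it contains a spanning cycle. -/
def Hamiltonian (G : MultiGraph) : Prop :=
  ∃ n, 1 ≤ n ∧ ∃ f : Emb (CycleG n) G, Function.Surjective f.vmap

/-- The class of graphs constructible from (isomorphic copies of) graphs in `B`
by gluing operations whose gluing subgraphs lie in `T`. -/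
inductive GeneratesW (B T : Set MultiGraph) : MultiGraph → Prop
  | base {H G : MultiGraph} : B H → Iso H G → GeneratesW B T G
  | glue {G G₁ G₂ Gt : MultiGraph} : GeneratesW B T G₁ → GeneratesW B T G₂ →
      T Gt → IsGluing G G₁ G₂ Gt → GeneratesW B T G

/-- The closure of a set of graphs under arbitrary gluing operations. -/
def Generates (B : Set MultiGraph) : Set MultiGraph := {G | GeneratesW B Set.univ G}

/-- A class of graphs closed under isomorphism. -/
def IsoClosed (C : Set MultiGraph) : Prop := ∀ G H, G ∈ C → Iso G H → H ∈ C

/-- A closed class of graphs: closed under isomorphism and gluing operations. -/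
def ClosedClass (C : Set MultiGraph) : Prop :=
  IsoClosed C ∧ ∀ G G₁ G₂ Gt, G₁ ∈ C → G₂ ∈ C → IsGluing G G₁ G₂ Gt → G ∈ C

def Emb.comp {G H K : MultiGraph} (f : Emb G H) (g : Emb H K) : Emb G K where
  vmap := g.vmap ∘ f.vmap
  emap := g.emap ∘ f.emap
  vinj := g.vinj.comp f.vinj
  einj := g.einj.comp f.einj
  ends_eq := fun e => by
    simp [g.ends_eq, f.ends_eq, Sym2.map_map]

lemma emb_antisymm {G H : MultiGraph} (f : Emb G H) (g : Emb H G) : Nonempty (Iso G H) := by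
  have hv : Fintype.card G.V = Fintype.card H.V :=
    le_antisymm (Fintype.card_le_of_injective _ f.vinj) (Fintype.card_le_of_injective _ g.vinj)
  have he : Fintype.card G.E = Fintype.card H.E :=
    le_antisymm (Fintype.card_le_of_injective _ f.einj) (Fintype.card_le_of_injective _ g.einj)
  exact ⟨{ toEmb := f,
           vsurj := ((Fintype.bijective_iff_injective_and_card _).2 ⟨f.vinj, hv⟩).2,
           esurj := ((Fintype.bijective_iff_injective_and_card _).2 ⟨f.einj, he⟩).2 }⟩

lemma generates_emb {C₁ : Set MultiGraph} (hC₁ : ClosedClass C₁) (r : MultiGraph)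
    {H : MultiGraph} (h : GeneratesW (C₁ ∪ {r}) Set.univ H) :
    H ∈ C₁ ∨ Nonempty (Emb r H) := by
  induction h with
  | @base B G hB hiso =>
    rcases hB with hB | hB
    · exact Or.inl (hC₁.1 _ _ hB hiso)
    · exact Or.inr ⟨hB ▸ hiso.toEmb⟩
  | @glue G G₁ G₂ Gt _ _ _ hglue ih₁ ih₂ =>
    obtain ⟨j₁, j₂, f₁, f₂, _⟩ := hglue
    rcases ih₁ with h1 | ⟨e1⟩
    · rcases ih₂ with h2 | ⟨e2⟩
      · exact Or.inl (hC₁.2 G G₁ G₂ Gt h1 h2 ⟨j₁, j₂, f₁, f₂, ‹_›⟩)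
      · exact Or.inr (e2.elim fun e => ⟨e.comp f₂⟩)
    · exact Or.inr (e1.elim fun e => ⟨e.comp f₁⟩)

/-- If a closed class `C₁` is precomplete in a closed class `C₂`, then
`C₂ \ C₁` contains exactly one graph up to isomorphism. -/
theorem precomplete_trivial (C₁ C₂ : Set MultiGraph)
    (h₁ : ClosedClass C₁) (h₂ : ClosedClass C₂) (hss : C₁ ⊂ C₂)
    (hpre : ∀ r ∈ C₂ \ C₁, Generates (C₁ ∪ {r}) = C₂) :
    ∀ G ∈ C₂ \ C₁, ∀ H ∈ C₂ \ C₁, Nonempty (Iso G H) := by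
  intro G hG H hH
  have hHG : H ∈ Generates (C₁ ∪ {G}) := (hpre G hG) ▸ hH.1
  have hGH : G ∈ Generates (C₁ ∪ {H}) := (hpre H hH) ▸ hG.1
  rcases generates_emb h₁ G hHG with h | ⟨f⟩
  · exact absurd h hH.2
  rcases generates_emb h₁ H hGH with h | ⟨g⟩
  · exact absurd h hG.2
  exact g.elim fun g' => f.elim fun f' => emb_antisymm f' g'
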